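/- arXiv:1610.00808 — 2 statements merged into one kernel-verified Lean document; each statement's English description precedes it below -/
import Mathlib

section
/- For a fixed finite group G, the assignment sending a finite G-set X to X/G and the class of a span Y ← T → X of G-sets to the span ⟨G×T, β̲, ᾱ⟩ defines an R-linear functor A from the Burnside (span) category Span_R(G-set) to C_R; in particular, for spans Z ← S → Y and Y ← T → X, the map φ: (G×S) ×̂_G (G×T) → G×Q given by φ([(g₁,s),(g₂,t)]) = (g₁g₂, (s, g₁t)) is an isomorphism of (G×G)-sets commuting with the structure maps, where Q = {(s,t) : γ(s) = β(t)} is the pullback with diagonal G-action. -/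
open CategoryTheory

/-- Objects of the category `𝒞_R`: a finite group `G` together with a finite `G`-set `X`,
thought of as the fraction `X/G`. -/
structure CObj : Type 1 where
  (G : Type)
  [grp : Group G]
  [finG : Finite G]
  (X : Type)
  [act : MulAction G X]
  [finX : Finite X]

attribute [instance] CObj.grp CObj.finG CObj.act CObj.finX

/-- Build an object `X/G` of `𝒞_R`. -/
@[reducible] def objOf (G : Type) [Group G] [Finite G] (X : Type) [MulAction G X] [Finite X] : CObj :=
  ⟨G, X⟩

/-- A span of bisets from `X/G` to `Y/H`: an `(H × G)`-set `U` with structure maps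
`β : U → Y`, `α : U → X` satisfying `β ((h,g) • u) = h • β u` and `α ((h,g) • u) = g • α u`. -/
structure Span (A B : CObj) : Type 1 where
  (U : Type)
  [act : MulAction (B.G × A.G) U]
  [finU : Finite U]
  (β : U → B.X)
  (α : U → A.X)
  (equiv_β : ∀ (h : B.G) (g : A.G) (u : U), β ((h, g) • u) = h • β u)
  (equiv_α : ∀ (h : B.G) (g : A.G) (u : U), α ((h, g) • u) = g • α u)

attribute [instance] Span.act Span.finU

/-- An equivalence of spans: an equivariant bijection commuting with both structure maps. -/
structure SpanIso {A B : CObj} (S T : Span A B) : Type where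
  (e : S.U ≃ T.U)
  (equiv : ∀ (p : B.G × A.G) (u : S.U), e (p • u) = p • e u)
  (hβ : ∀ u, T.β (e u) = S.β u)
  (hα : ∀ u, T.α (e u) = S.α u)

lemma pair_one_smul {M N α : Type*} [Monoid M] [Monoid N] [MulAction (M × N) α] (x : α) :
    ((1 : M), (1 : N)) • x = x := by
  have h : ((1 : M), (1 : N)) = (1 : M × N) := rfl
  rw [h, one_smul]

lemma smul_smul_pair {M N α : Type*} [Monoid M] [Monoid N] [MulAction (M × N) α]
    (a c : M) (b d : N) (x : α) : (a, b) • (c, d) • x = (a * c, b * d) • x := by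
  rw [← mul_smul]; rfl

/-- The fiber of the composition: pairs `(v, u)` with `γ v = β u`. -/
def compFiber {A B C : CObj} (S : Span A B) (T : Span B C) : Type :=
  {p : T.U × S.U // T.α p.1 = S.β p.2}

instance {A B C : CObj} (S : Span A B) (T : Span B C) : Finite (compFiber S T) :=
  Subtype.finite

/-- The `H`-orbit relation on the fiber. -/
def compSetoid {A B C : CObj} (S : Span A B) (T : Span B C) : Setoid (compFiber S T) where
  r p q := ∃ h : B.G, q.1.1 = ((1 : C.G), h) • p.1.1 ∧ q.1.2 = (h, (1 : A.G)) • p.1.2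
  iseqv := by
    constructor
    · intro p
      exact ⟨1, by simp [pair_one_smul], by simp [pair_one_smul]⟩
    · rintro p q ⟨h, h1, h2⟩
      exact ⟨h⁻¹, by simp [h1, smul_smul_pair, pair_one_smul],
        by simp [h2, smul_smul_pair, pair_one_smul]⟩
    · rintro p q r ⟨h, h1, h2⟩ ⟨h', h1', h2'⟩
      exact ⟨h' * h, by simp [h1', h1, smul_smul_pair],
        by simp [h2', h2, smul_smul_pair]⟩

/-- Composition of spans: `S.comp T` is the composite `T ∘ S` (first `S : X/G → Y/H`,
then `T : Y/H → Z/K`), given by the set of `H`-orbits `V ×̂_H U` with the induced maps. -/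
def Span.comp {A B C : CObj} (S : Span A B) (T : Span B C) : Span A C where
  U := Quotient (compSetoid S T)
  act :=
    { smul := fun m => Quotient.map
        (fun q => ⟨((m.1, (1 : B.G)) • q.1.1, ((1 : B.G), m.2) • q.1.2), by
          rw [T.equiv_α, S.equiv_β, one_smul, one_smul]; exact q.2⟩)
        (by
          rintro p q ⟨h, h1, h2⟩
          exact ⟨h, by simp [h1, smul_smul_pair], by simp [h2, smul_smul_pair]⟩)
      one_smul := by
        rintro ⟨p⟩
        exact Quotient.sound ⟨1, by simp [smul_smul_pair, pair_one_smul],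
          by simp [smul_smul_pair, pair_one_smul]⟩
      mul_smul := fun m n => by
        rintro ⟨p⟩
        exact Quotient.sound ⟨1, by simp [smul_smul_pair, pair_one_smul],
          by simp [smul_smul_pair, pair_one_smul]⟩ }
  finU := Quotient.finite _
  β := Quotient.lift (fun p => T.β p.1.1)
    (by rintro p q ⟨h, h1, h2⟩; show T.β p.val.1 = T.β q.val.1; rw [h1, T.equiv_β, one_smul])
  α := Quotient.lift (fun p => S.α p.1.2)
    (by rintro p q ⟨h, h1, h2⟩; show S.α p.val.2 = S.α q.val.2; rw [h2, S.equiv_α, one_smul])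
  equiv_β := by rintro c a ⟨p⟩; exact T.equiv_β c 1 p.1.1
  equiv_α := by rintro c a ⟨p⟩; exact S.equiv_α 1 a p.1.2

/-- The conjugation-type action of `G × G` on `G × X`:
`(a, b) • (g, x) = (a g b⁻¹, a • x)`. -/
def conjAct (G X : Type) [Group G] [MulAction G X] : MulAction (G × G) (G × X) where
  smul p q := (p.1 * q.1 * p.2⁻¹, p.1 • q.2)
  one_smul := by
    rintro ⟨g, x⟩
    show (1 * g * 1⁻¹, (1 : G) • x) = (g, x)
    simp
  mul_smul := by
    rintro ⟨a, b⟩ ⟨c, d⟩ ⟨g, x⟩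
    show ((a * c) * g * (b * d)⁻¹, ((a * c) : G) • x) = (a * (c * g * d⁻¹) * b⁻¹, a • c • x)
    simp [mul_assoc, mul_smul, mul_inv_rev]

/-- The identity span `⟨G × X, 1̲, 1̄⟩` of the object `X/G`. -/
def Span.id (A : CObj) : Span A A where
  U := A.G × A.X
  act := conjAct A.G A.X
  finU := inferInstance
  β := fun q => q.2
  α := fun q => q.1⁻¹ • q.2
  equiv_β := fun _ _ _ => rfl
  equiv_α := by
    rintro h g ⟨a, x⟩
    show (h * a * g⁻¹)⁻¹ • (h • x) = g • a⁻¹ • x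
    simp [mul_inv_rev, mul_smul]


/-- The left-coset relation on a group `Γ` with respect to a subgroup `D`. -/
def cosetSetoid {Γ : Type} [Group Γ] (D : Subgroup Γ) : Setoid Γ where
  r p q := ∃ d ∈ D, q = p * d
  iseqv := by
    constructor
    · exact fun p => ⟨1, D.one_mem, by simp⟩
    · rintro p q ⟨d, hd, rfl⟩
      exact ⟨d⁻¹, D.inv_mem hd, by simp [mul_assoc]⟩
    · rintro p q r ⟨d, hd, rfl⟩ ⟨e, he, rfl⟩
      exact ⟨d * e, D.mul_mem hd he, by simp [mul_assoc]⟩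

/-- The set of left cosets `Γ/D`. -/
def Cosets {Γ : Type} [Group Γ] (D : Subgroup Γ) : Type := Quotient (cosetSetoid D)

/-- The coset of an element. -/
def Cosets.mk {Γ : Type} [Group Γ] (D : Subgroup Γ) (g : Γ) : Cosets D :=
  Quotient.mk _ g

instance {Γ : Type} [Group Γ] (D : Subgroup Γ) : MulAction Γ (Cosets D) where
  smul m := Quotient.map (fun p => m * p)
    (by rintro p q ⟨d, hd, rfl⟩; exact ⟨d, hd, by rw [mul_assoc]⟩)
  one_smul := by rintro ⟨p⟩; exact congrArg (Quotient.mk _) (one_mul p)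
  mul_smul m n := by rintro ⟨p⟩; exact congrArg (Quotient.mk _) (mul_assoc m n p)

instance {Γ : Type} [Group Γ] [Finite Γ] (D : Subgroup Γ) : Finite (Cosets D) :=
  Quotient.finite _

/-- The span `⟨G×T, β̲, ᾱ⟩` of `𝒞_R` associated to a span `Y ← T → X` of `G`-sets:
`G × T` carries the `(G × G)`-action `(g₁,g₂) • (g,t) = (g₁ g g₂⁻¹, g₁ • t)`, with
`β̲(g,t) = β t` and `ᾱ(g,t) = g⁻¹ • α t`. -/
def ASpan (G : Type) [Group G] [Finite G] {X Y T : Type}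
    [MulAction G X] [Finite X] [MulAction G Y] [Finite Y] [MulAction G T] [Finite T]
    (β : T → Y) (α : T → X)
    (hβ : ∀ (g : G) (t : T), β (g • t) = g • β t)
    (hα : ∀ (g : G) (t : T), α (g • t) = g • α t) :
    Span (objOf G X) (objOf G Y) where
  U := G × T
  act := conjAct G T
  finU := inferInstance
  β := fun q => β q.2
  α := fun q => q.1⁻¹ • α q.2
  equiv_β := by
    rintro h g ⟨a, t⟩
    show β (h • t) = h • β t
    exact hβ h t
  equiv_α := by
    rintro h g ⟨a, t⟩
    show (h * a * g⁻¹)⁻¹ • α (h • t) = g • a⁻¹ • α t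
    rw [hα]
    simp [mul_inv_rev, mul_smul]

section Stmt17

variable (G : Type) [Group G] [Finite G] {X Y Z S T : Type}
  [MulAction G X] [Finite X] [MulAction G Y] [Finite Y] [MulAction G Z] [Finite Z]
  [MulAction G S] [Finite S] [MulAction G T] [Finite T]
  (δ : S → Z) (γ : S → Y) (β : T → Y) (α : T → X)
  (hδ : ∀ (g : G) (s : S), δ (g • s) = g • δ s)
  (hγ : ∀ (g : G) (s : S), γ (g • s) = g • γ s)
  (hβ : ∀ (g : G) (t : T), β (g • t) = g • β t)
  (hα : ∀ (g : G) (t : T), α (g • t) = g • α t)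

/-- The pullback `Q = {(s,t) : γ s = β t}` of two spans of `G`-sets. -/
def Pullback : Type := {p : S × T // γ p.1 = β p.2}

instance : Finite (Pullback γ β) := Subtype.finite

/-- The diagonal `G`-action on the pullback. -/
def pullbackAct : MulAction G (Pullback γ β) where
  smul g q := ⟨(g • q.1.1, g • q.1.2), by rw [hγ, hβ, q.2]⟩
  one_smul := by
    rintro ⟨⟨s, t⟩, hc⟩
    apply Subtype.ext
    show ((1 : G) • s, (1 : G) • t) = (s, t)
    simp
  mul_smul := by
    rintro g g' ⟨⟨s, t⟩, hc⟩
    apply Subtype.ext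
    show ((g * g') • s, (g * g') • t) = (g • g' • s, g • g' • t)
    simp [mul_smul]

/-- The underlying map of φ on the fiber. -/
def phiFun (p : compFiber (ASpan G β α hβ hα) (ASpan G δ γ hδ hγ)) :
    G × Pullback γ β :=
  (p.1.1.1 * p.1.2.1, ⟨(p.1.1.2, p.1.1.1 • p.1.2.2), by
    have h : p.1.1.1⁻¹ • γ p.1.1.2 = β p.1.2.2 := p.2
    rw [hβ, ← h, smul_inv_smul]⟩)

lemma phiFun_resp : ∀ (p q : compFiber (ASpan G β α hβ hα) (ASpan G δ γ hδ hγ)),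
    (compSetoid (ASpan G β α hβ hα) (ASpan G δ γ hδ hγ)).r p q →
    phiFun G δ γ β α hδ hγ hβ hα p = phiFun G δ γ β α hδ hγ hβ hα q := by
  rintro ⟨⟨⟨g₁, s⟩, ⟨g₂, t⟩⟩, hc⟩ ⟨⟨⟨g₁', s'⟩, ⟨g₂', t'⟩⟩, hc'⟩ ⟨h, h1, h2⟩
  have e1 : ((g₁', s') : G × S) = (1 * g₁ * h⁻¹, (1 : G) • s) := h1
  have e2 : ((g₂', t') : G × T) = (h * g₂ * 1⁻¹, h • t) := h2
  injection e1 with hg1 hs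
  injection e2 with hg2 ht
  subst hg1; subst hs; subst hg2; subst ht
  refine Prod.ext ?_ (Subtype.ext (Prod.ext ?_ ?_)) <;>
    simp [phiFun, mul_assoc, mul_smul]

/-- φ as a map on the quotient. -/
def phiQuot : ((ASpan G β α hβ hα).comp (ASpan G δ γ hδ hγ)).U → G × Pullback γ β :=
  Quotient.lift (phiFun G δ γ β α hδ hγ hβ hα) (phiFun_resp G δ γ β α hδ hγ hβ hα)

/-- The inverse of φ. -/
def phiInv (q : G × Pullback γ β) :
    ((ASpan G β α hβ hα).comp (ASpan G δ γ hδ hγ)).U :=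
  Quotient.mk _ ⟨((1, q.2.1.1), (q.1, q.2.1.2)), by
    show (1 : G)⁻¹ • γ q.2.1.1 = β q.2.1.2
    simpa using q.2.2⟩

/-- For a fixed finite group `G`, sending a `G`-set `X` to `X/G` and a
span `Y ← T → X` of `G`-sets to `⟨G×T, β̲, ᾱ⟩` defines an (`R`-linear) functor
`A : Span_R(G-set) → 𝒞_R`: it sends the identity span to the identity span, and for spans
`Z ← S → Y` and `Y ← T → X` the map `φ([(g₁,s),(g₂,t)]) = (g₁ g₂, (s, g₁ • t))` is an
isomorphism of `(G×G)`-sets from the composite `(G×S) ×̂_G (G×T)` to `G × Q` commuting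
with the structure maps. -/
theorem burnside_span_functor :
    Nonempty (SpanIso
        (ASpan G (fun x : X => x) (fun x : X => x) (fun _ _ => rfl) (fun _ _ => rfl))
        (Span.id (objOf G X))) ∧
      ∃ iso : SpanIso
          ((ASpan G β α hβ hα).comp (ASpan G δ γ hδ hγ))
          (@ASpan G _ _ X Z (Pullback γ β) _ _ _ _ (pullbackAct G γ β hγ hβ) _
            (fun q => δ q.1.1) (fun q => α q.1.2)
            (fun g q => hδ g q.1.1) (fun g q => hα g q.1.2)),
        ∀ (g₁ : G) (s : S) (g₂ : G) (t : T)
          (hc : g₁⁻¹ • γ s = β t) (hQ : γ s = β (g₁ • t)),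
          iso.e (Quotient.mk (compSetoid (ASpan G β α hβ hα) (ASpan G δ γ hδ hγ))
              ⟨((g₁, s), (g₂, t)), hc⟩) =
            (g₁ * g₂, ⟨(s, g₁ • t), hQ⟩) := by
  constructor
  · exact ⟨⟨Equiv.refl _, fun _ _ => rfl, fun _ => rfl, fun _ => rfl⟩⟩
  · refine ⟨⟨⟨phiQuot G δ γ β α hδ hγ hβ hα, phiInv G δ γ β α hδ hγ hβ hα, ?_, ?_⟩, ?_, ?_, ?_⟩, ?_⟩
    · -- left inverse
      rintro ⟨⟨⟨⟨g₁, s⟩, ⟨g₂, t⟩⟩, hc⟩⟩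
      refine Quotient.sound ⟨g₁⁻¹, ?_, ?_⟩
      · show ((g₁ : G), s) = (1 * 1 * (g₁⁻¹)⁻¹, (1 : G) • s)
        simp
      · show ((g₂ : G), t) = (g₁⁻¹ * (g₁ * g₂) * 1⁻¹, g₁⁻¹ • g₁ • t)
        refine Prod.ext ?_ ?_ <;> simp [mul_assoc]
    · -- right inverse
      rintro ⟨g, ⟨⟨s, t⟩, hst⟩⟩
      exact Prod.ext (one_mul g) (Subtype.ext (Prod.ext rfl (one_smul G t)))
    · -- equivariance
      rintro ⟨a, b⟩ ⟨⟨⟨⟨g₁, s⟩, ⟨g₂, t⟩⟩, hc⟩⟩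
      refine Prod.ext ?_ (Subtype.ext (Prod.ext rfl ?_))
      · show a * g₁ * 1⁻¹ * (1 * g₂ * b⁻¹) = a * (g₁ * g₂) * b⁻¹
        simp [mul_assoc]
      · show (a * g₁ * 1⁻¹ : G) • (1 : G) • t = (a : G) • g₁ • t
        simp [mul_smul]
    · -- hβ
      rintro ⟨⟨⟨⟨g₁, s⟩, ⟨g₂, t⟩⟩, hc⟩⟩
      rfl
    · -- hα
      rintro ⟨⟨⟨⟨g₁, s⟩, ⟨g₂, t⟩⟩, hc⟩⟩
      show (g₁ * g₂)⁻¹ • α (g₁ • t) = g₂⁻¹ • α t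
      rw [hα]
      simp [mul_inv_rev, mul_smul]
    · -- the formula
      intro g₁ s g₂ t hc hQ
      rfl

end Stmt17
end

section
/- The functor A: Span_R(G-set) → C_R is not faithful: two spans Y ← U → X (maps β, α) and Y ← U' → X (maps β', α') of G-sets have the same image under A if and only if there exist an isomorphism of G-sets f: U → U' and a morphism of G-sets t: U → G^c (G with conjugation action) such that β'∘f = β and α'(f(u)) = t(u)·α(u) for all u ∈ U. In particular, for any nonconstant G-map t: U → G^c, the spans U ← U → U with legs (id,id) and (id, t·id) both map to the identity of U/G. -/
open CategoryTheory

/-!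
An isomorphism `σ` between the images `⟨G × U, β̲, ᾱ⟩` and `⟨G × U', β̲', ᾱ'⟩` is
`(G × G)`-equivariant, so it is determined by its restriction to the slice `{1} × U`:
equivariance under `(1, g⁻¹)` gives `σ (g, u) = (t u * g, f u)` where `σ (1, u) = (t u, f u)`,
and equivariance under the diagonal `(g, g)` makes `f` a map of `G`-sets and `t` a map into
`G^c`. Conversely any such pair `(f, t)` defines an isomorphism by the same formula. The leg
`ᾱ` absorbs the twist: `ᾱ' (t u, f u) = (t u)⁻¹ • α' (f u)` must equal `α u`.
-/

def twistEquiv {G U U' : Type} [Group G] (f : U ≃ U') (t : U → G) : G × U ≃ G × U' where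
  toFun q := (t q.2 * q.1, f q.2)
  invFun q := ((t (f.symm q.2))⁻¹ * q.1, f.symm q.2)
  left_inv q := by simp
  right_inv q := by simp

section ASpanIso

variable {G X Y U U' : Type} [Group G] [Finite G] [MulAction G X] [Finite X]
  [MulAction G Y] [Finite Y] [MulAction G U] [Finite U] [MulAction G U'] [Finite U']
  {β : U → Y} {α : U → X} {β' : U' → Y} {α' : U' → X}
  {hβ : ∀ (g : G) (u : U), β (g • u) = g • β u} {hα : ∀ (g : G) (u : U), α (g • u) = g • α u}
  {hβ' : ∀ (g : G) (u : U'), β' (g • u) = g • β' u}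
  {hα' : ∀ (g : G) (u : U'), α' (g • u) = g • α' u}

namespace SpanIso

variable (σ : SpanIso (ASpan G β α hβ hα) (ASpan G β' α' hβ' hα'))

def baseMap (u : U) : U' := (σ.e (1, u)).2

def twist (u : U) : G := (σ.e (1, u)).1

lemma e_apply (g : G) (u : U) : σ.e (g, u) = (σ.twist u * g, σ.baseMap u) := by
  have h : σ.e (1 * 1 * g⁻¹⁻¹, (1 : G) • u) = (1 * σ.twist u * g⁻¹⁻¹, (1 : G) • σ.baseMap u) :=
    σ.equiv (1, g⁻¹) (1, u)
  simpa using h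

lemma e_one_smul (g : G) (u : U) :
    σ.e (1, g • u) = (g * σ.twist u * g⁻¹, g • σ.baseMap u) := by
  have h : σ.e (g * 1 * g⁻¹, g • u) = (g * σ.twist u * g⁻¹, g • σ.baseMap u) :=
    σ.equiv (g, g) (1, u)
  simpa using h

lemma baseMap_smul (g : G) (u : U) : σ.baseMap (g • u) = g • σ.baseMap u :=
  congrArg Prod.snd (σ.e_one_smul g u)

lemma twist_smul (g : G) (u : U) : σ.twist (g • u) = g * σ.twist u * g⁻¹ :=
  congrArg Prod.fst (σ.e_one_smul g u)

lemma baseMap_bijective : Function.Bijective σ.baseMap := by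
  constructor
  · intro u₁ u₂ h
    have h' : σ.e ((σ.twist u₁)⁻¹ * σ.twist u₂, u₁) = σ.e (1, u₂) := by
      rw [e_apply, e_apply, h, mul_inv_cancel_left, mul_one]
    exact congrArg Prod.snd (σ.e.injective h')
  · intro v
    obtain ⟨⟨g, u⟩, hu⟩ := σ.e.surjective (1, v)
    exact ⟨u, by simpa [e_apply] using congrArg Prod.snd hu⟩

lemma β_baseMap (u : U) : β' (σ.baseMap u) = β u :=
  σ.hβ (1, u)

lemma α_baseMap (u : U) : α' (σ.baseMap u) = σ.twist u • α u := by
  have h : (σ.twist u)⁻¹ • α' (σ.baseMap u) = (1 : G)⁻¹ • α u := σ.hα (1, u)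
  rw [inv_one, one_smul, inv_smul_eq_iff] at h
  exact h

end SpanIso

def SpanIso.ofTwist (f : U ≃ U') (hf : ∀ (g : G) (u : U), f (g • u) = g • f u)
    (t : U → G) (ht : ∀ (g : G) (u : U), t (g • u) = g * t u * g⁻¹)
    (hfβ : ∀ u : U, β' (f u) = β u) (hfα : ∀ u : U, α' (f u) = t u • α u) :
    SpanIso (ASpan G β α hβ hα) (ASpan G β' α' hβ' hα') where
  e := twistEquiv f t
  equiv := by
    rintro ⟨a, b⟩ ⟨g, u⟩
    show (t (a • u) * (a * g * b⁻¹), f (a • u)) = (a * (t u * g) * b⁻¹, a • f u)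
    rw [ht, hf]
    simp only [Prod.mk.injEq, and_true]
    group
  hβ q := hfβ q.2
  hα := by
    rintro ⟨g, u⟩
    show (t u * g)⁻¹ • α' (f u) = g⁻¹ • α u
    rw [hfα, mul_inv_rev, mul_smul, inv_smul_smul]

theorem nonempty_spanIso_ASpan_iff :
    Nonempty (SpanIso (ASpan G β α hβ hα) (ASpan G β' α' hβ' hα')) ↔
      ∃ f : U ≃ U', (∀ (g : G) (u : U), f (g • u) = g • f u) ∧
        ∃ t : U → G, (∀ (g : G) (u : U), t (g • u) = g * t u * g⁻¹) ∧
          (∀ u : U, β' (f u) = β u) ∧ (∀ u : U, α' (f u) = t u • α u) :=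
  ⟨fun ⟨σ⟩ => ⟨Equiv.ofBijective _ σ.baseMap_bijective, σ.baseMap_smul, σ.twist, σ.twist_smul,
      σ.β_baseMap, σ.α_baseMap⟩,
    fun ⟨f, hf, t, ht, hfβ, hfα⟩ => ⟨SpanIso.ofTwist f hf t ht hfβ hfα⟩⟩

end ASpanIso

lemma Span.id_eq_ASpan (G U : Type) [Group G] [Finite G] [MulAction G U] [Finite U] :
    Span.id (objOf G U) = ASpan G (fun u : U => u) (fun u => u) (fun _ _ => rfl) (fun _ _ => rfl) :=
  rfl

section Stmt18

variable (G : Type) [Group G] [Finite G] {X Y U U' : Type}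
  [MulAction G X] [Finite X] [MulAction G Y] [Finite Y]
  [MulAction G U] [Finite U] [MulAction G U'] [Finite U']

/-- The functor `A : Span_R(G-set) → 𝒞_R` is not faithful: two spans
`Y ← U → X` and `Y ← U' → X` of `G`-sets have the same image under `A` (i.e. equivalent
image spans) if and only if there exist an isomorphism of `G`-sets `f : U → U'` and a
`G`-map `t : U → G^c` (`G` with the conjugation action) with `β' ∘ f = β` and
`α' (f u) = t u • α u`. In particular, for any `G`-map `t : U → G^c`, the spans
`U ← U → U` with legs `(id, id)` and `(id, t·id)` both map to the identity of `U/G`. -/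
theorem burnside_span_functor_not_faithful
    (β : U → Y) (α : U → X) (β' : U' → Y) (α' : U' → X)
    (hβ : ∀ (g : G) (u : U), β (g • u) = g • β u)
    (hα : ∀ (g : G) (u : U), α (g • u) = g • α u)
    (hβ' : ∀ (g : G) (u : U'), β' (g • u) = g • β' u)
    (hα' : ∀ (g : G) (u : U'), α' (g • u) = g • α' u) :
    (Nonempty (SpanIso (ASpan G β α hβ hα) (ASpan G β' α' hβ' hα')) ↔
      ∃ f : U ≃ U', (∀ (g : G) (u : U), f (g • u) = g • f u) ∧
        ∃ t : U → G, (∀ (g : G) (u : U), t (g • u) = g * t u * g⁻¹) ∧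
          (∀ u : U, β' (f u) = β u) ∧ (∀ u : U, α' (f u) = t u • α u)) ∧
    ∀ (t : U → G) (ht : ∀ (g : G) (u : U), t (g • u) = g * t u * g⁻¹),
      Nonempty (SpanIso
        (ASpan G (fun u : U => u) (fun u : U => t u • u) (fun _ _ => rfl)
          (fun g u => by
            show t (g • u) • (g • u) = g • (t u • u)
            rw [ht]
            simp [mul_smul]))
        (Span.id (objOf G U))) := by
  refine ⟨nonempty_spanIso_ASpan_iff, fun t ht => ?_⟩
  rw [Span.id_eq_ASpan]
  exact nonempty_spanIso_ASpan_iff.2 ⟨Equiv.refl U, fun _ _ => rfl, fun u => (t u)⁻¹,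
    fun g u => by simp only [ht]; group, fun _ => rfl, fun u => (inv_smul_smul (t u) u).symm⟩

end Stmt18
end
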